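/- arXiv:2205.02158 — 2 statements merged into one kernel-verified Lean document; each statement's English description precedes it below -/
import Mathlib

section
/- On a weak K-manifold (a manifold with a weak K-structure), the vector fields ξ_1, …, ξ_p are Killing; moreover, ∇_{ξ_i} ξ_j = 0 for all i, j, so that the characteristic distribution ker f is integrable and defines a totally geodesic foliation. -/
/-!
An algebraic model of the calculus of smooth vector fields on a smooth manifold
`M^{2n+p}`: `F` plays the role of the ordered commutative `ℝ`-algebra `C^∞(M)` of
smooth real-valued functions, and `V` the `F`-module `𝔛(M)` of smooth vector fields,
equipped with the derivation action `D` of vector fields on functions, the Lie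
bracket of vector fields, a Riemannian metric `g` (a symmetric, `F`-bilinear,
positive-definite form) and its Levi-Civita connection `nabla` (the unique metric,
torsion-free affine connection of `g`).
-/

noncomputable section

structure RiemannCalculus (F V : Type*) [CommRing F] [PartialOrder F] [IsOrderedRing F] [Algebra ℝ F]
    [AddCommGroup V] [Module F V] where
  /-- the derivation action `X φ` of a vector field `X` on a function `φ` -/
  D : V → F → F
  D_add_left : ∀ X Y φ, D (X + Y) φ = D X φ + D Y φ
  D_smul_left : ∀ (ψ : F) (X : V) (φ : F), D (ψ • X) φ = ψ * D X φ
  D_add_right : ∀ (X : V) (φ ψ : F), D X (φ + ψ) = D X φ + D X ψ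
  D_mul_right : ∀ (X : V) (φ ψ : F), D X (φ * ψ) = φ * D X ψ + ψ * D X φ
  D_algebraMap : ∀ (X : V) (r : ℝ), D X (algebraMap ℝ F r) = 0
  /-- the Lie bracket `[X, Y]` of vector fields -/
  bracket : V → V → V
  bracket_add_left : ∀ X Y Z, bracket (X + Y) Z = bracket X Z + bracket Y Z
  bracket_antisymm : ∀ X Y, bracket X Y = -bracket Y X
  bracket_leibniz : ∀ (X : V) (φ : F) (Y : V),
    bracket X (φ • Y) = φ • bracket X Y + D X φ • Y
  bracket_jacobi : ∀ X Y Z,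
    bracket X (bracket Y Z) = bracket (bracket X Y) Z + bracket Y (bracket X Z)
  D_bracket : ∀ X Y φ, D (bracket X Y) φ = D X (D Y φ) - D Y (D X φ)
  /-- the Riemannian metric `g` -/
  g : V → V → F
  g_symm : ∀ X Y, g X Y = g Y X
  g_add_left : ∀ X Y Z, g (X + Y) Z = g X Z + g Y Z
  g_smul_left : ∀ (φ : F) (X Y : V), g (φ • X) Y = φ * g X Y
  g_nonneg : ∀ X, 0 ≤ g X X
  g_definite : ∀ X, g X X = 0 → X = 0
  /-- the Levi-Civita connection `∇` of `g` -/
  nabla : V → V → V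
  nabla_add_left : ∀ X Y Z, nabla (X + Y) Z = nabla X Z + nabla Y Z
  nabla_smul_left : ∀ (φ : F) (X Y : V), nabla (φ • X) Y = φ • nabla X Y
  nabla_add_right : ∀ X Y Z, nabla X (Y + Z) = nabla X Y + nabla X Z
  nabla_leibniz : ∀ (X : V) (φ : F) (Y : V),
    nabla X (φ • Y) = φ • nabla X Y + D X φ • Y
  nabla_metric : ∀ X Y Z, D X (g Y Z) = g (nabla X Y) Z + g Y (nabla X Z)
  nabla_torsion_free : ∀ X Y, nabla X Y - nabla Y X = bracket X Y

/-- A metric weak `f`-structure `(f, Q, ξ_i, η^i, g)` on a smooth manifold `M^{2n+p}`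
(Rovenski–Wolak): `f` is a `(1,1)`-tensor field of rank `2n`, `Q` a nonsingular
`(1,1)`-tensor field, `ξ_1, …, ξ_p` vector fields spanning `ker f`, and `η^1, …, η^p`
the dual `1`-forms, satisfying `f³ + f∘Q = 0`, `Q ξᵢ = ξᵢ`,
`f² = -Q + Σᵢ ηⁱ ⊗ ξᵢ`, `ηⁱ(ξⱼ) = δⁱⱼ`, together with a compatible Riemannian
metric: `g(fX, fY) = g(X, QY) - Σᵢ ηⁱ(X) ηⁱ(QY)`. -/
structure MetricWeakFStructure (p : ℕ) (F V : Type*) [CommRing F] [PartialOrder F] [IsOrderedRing F] [Algebra ℝ F]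
    [AddCommGroup V] [Module F V] extends RiemannCalculus F V where
  f : V →ₗ[F] V
  Q : V →ₗ[F] V
  ξ : Fin p → V
  η : Fin p → V →ₗ[F] F
  Q_nonsingular : Function.Bijective Q
  f_cubed : ∀ X, f (f (f X)) + f (Q X) = 0
  Q_xi : ∀ i, Q (ξ i) = ξ i
  f_squared : ∀ X, f (f X) = -Q X + ∑ i, η i X • ξ i
  eta_xi : ∀ i j, η i (ξ j) = if i = j then (1 : F) else 0
  /-- the `ηⁱ` are the coframe dual to the `ξᵢ` w.r.t. the splitting
  `TM = f(TM) ⊕ ker f` (equivalently, `ηⁱ ∘ f = 0`). -/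
  eta_Q : ∀ i X, η i (Q X) = η i X
  /-- the `ξᵢ` span `ker f` -/
  ker_f_spanned : ∀ X, f X = 0 → X ∈ Submodule.span F (Set.range ξ)
  compatible : ∀ X Y, g (f X) (f Y) = g X (Q Y) - ∑ i, η i X * η i (Q Y)

namespace MetricWeakFStructure

variable {p : ℕ} {F V : Type*} [CommRing F] [PartialOrder F] [IsOrderedRing F] [Algebra ℝ F]
  [AddCommGroup V] [Module F V] (S : MetricWeakFStructure p F V)

/-- the fundamental 2-form `Φ(X,Y) = g(X, fY)` -/
def Phi (X Y : V) : F := S.g X (S.f Y)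

/-- `dηⁱ(X,Y) = (1/2){X(ηⁱ(Y)) - Y(ηⁱ(X)) - ηⁱ([X,Y])}` -/
def dEta (i : Fin p) (X Y : V) : F :=
  algebraMap ℝ F (1 / 2) *
    (S.D X (S.η i Y) - S.D Y (S.η i X) - S.η i (S.bracket X Y))

/-- `dΦ(X,Y,Z) = (1/3){XΦ(Y,Z) + YΦ(Z,X) + ZΦ(X,Y) - Φ([X,Y],Z) - Φ([Z,X],Y) - Φ([Y,Z],X)}` -/
def dPhi (X Y Z : V) : F :=
  algebraMap ℝ F (1 / 3) *
    (S.D X (S.Phi Y Z) + S.D Y (S.Phi Z X) + S.D Z (S.Phi X Y)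
      - S.Phi (S.bracket X Y) Z - S.Phi (S.bracket Z X) Y - S.Phi (S.bracket Y Z) X)

/-- the Nijenhuis torsion `[f,f](X,Y) = f²[X,Y] + [fX,fY] - f[fX,Y] - f[X,fY]` -/
def nijenhuis (X Y : V) : V :=
  S.f (S.f (S.bracket X Y)) + S.bracket (S.f X) (S.f Y)
    - S.f (S.bracket (S.f X) Y) - S.f (S.bracket X (S.f Y))

/-- `N⁽¹⁾ = [f,f] + 2 Σᵢ dηⁱ ⊗ ξᵢ` -/
def N1 (X Y : V) : V := S.nijenhuis X Y + ∑ i, (2 * S.dEta i X Y) • S.ξ i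

/-- the Lie derivative of `f`: `(£_Z f)X = [Z, fX] - f[Z,X]` -/
def lieD_f (Z X : V) : V := S.bracket Z (S.f X) - S.f (S.bracket Z X)

/-- the Lie derivative of `ηʲ`: `(£_Z ηʲ)X = Z(ηʲ(X)) - ηʲ([Z,X])` -/
def lieD_eta (j : Fin p) (Z X : V) : F := S.D Z (S.η j X) - S.η j (S.bracket Z X)

/-- the Lie derivative of `g`: `(£_Z g)(X,Y) = Z(g(X,Y)) - g([Z,X],Y) - g(X,[Z,Y])` -/
def lieD_g (Z X Y : V) : F :=
  S.D Z (S.g X Y) - S.g (S.bracket Z X) Y - S.g X (S.bracket Z Y)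

/-- `N⁽²⁾ᵢ(X,Y) = (£_{fX} ηⁱ)Y - (£_{fY} ηⁱ)X` -/
def N2 (i : Fin p) (X Y : V) : F := S.lieD_eta i (S.f X) Y - S.lieD_eta i (S.f Y) X

/-- `N⁽³⁾ᵢ = £_{ξᵢ} f` -/
def N3 (i : Fin p) (X : V) : V := S.lieD_f (S.ξ i) X

/-- `N⁽⁴⁾ᵢⱼ = £_{ξᵢ} ηʲ` -/
def N4 (i j : Fin p) (X : V) : F := S.lieD_eta j (S.ξ i) X

/-- `Q̃ = Q - id` -/
def Qt (X : V) : V := S.Q X - X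

/-- `X^⊤ = X - Σᵢ ηⁱ(X) ξᵢ`, the `f(TM)`-component of `X` -/
def top (X : V) : V := X - ∑ i, S.η i X • S.ξ i

/-- `N⁽⁵⁾(X,Y,Z) = (fZ)(g(X^⊤,Q̃Y)) - (fY)(g(X^⊤,Q̃Z)) + g([X,fZ]^⊤,Q̃Y)
  - g([X,fY]^⊤,Q̃Z) + g([Y,fZ]^⊤ - [Z,fY]^⊤ - f[Y,Z], Q̃X)` -/
def N5 (X Y Z : V) : F :=
  S.D (S.f Z) (S.g (S.top X) (S.Qt Y)) - S.D (S.f Y) (S.g (S.top X) (S.Qt Z))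
    + S.g (S.top (S.bracket X (S.f Z))) (S.Qt Y)
    - S.g (S.top (S.bracket X (S.f Y))) (S.Qt Z)
    + S.g (S.top (S.bracket Y (S.f Z)) - S.top (S.bracket Z (S.f Y))
        - S.f (S.bracket Y Z)) (S.Qt X)

/-- the covariant derivative of `f`: `(∇_X f)Y = ∇_X(fY) - f(∇_X Y)` -/
def nablaF (X Y : V) : V := S.nabla X (S.f Y) - S.f (S.nabla X Y)

/-- `hᵢ = (1/2) £_{ξᵢ} f` -/
def hT (i : Fin p) (X : V) : V := algebraMap ℝ F (1 / 2) • S.N3 i X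

/-- a vector field `Z` is Killing if `£_Z g = 0` -/
def IsKilling (Z : V) : Prop := ∀ X Y : V, S.lieD_g Z X Y = 0

/-- the structure is normal if `N⁽¹⁾ = 0` -/
def Normal : Prop := ∀ X Y : V, S.N1 X Y = 0

/-- a weak K-structure: normal with `dΦ = 0` -/
def WeakK : Prop := S.Normal ∧ ∀ X Y Z : V, S.dPhi X Y Z = 0

/-- a weak almost S-structure: `dηⁱ = Φ` for all `i` -/
def WeakAlmostS : Prop := ∀ (i : Fin p) (X Y : V), S.dEta i X Y = S.Phi X Y

/-- a weak S-structure: a weak K-structure with `dηⁱ = Φ` for all `i` -/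
def WeakS : Prop := S.WeakK ∧ S.WeakAlmostS

/-- a weak almost C-structure: `dΦ = 0` and `dηⁱ = 0` for all `i` -/
def WeakAlmostC : Prop :=
  (∀ X Y Z : V, S.dPhi X Y Z = 0) ∧ ∀ (i : Fin p) (X Y : V), S.dEta i X Y = 0

/-- a weak C-structure: a weak K-structure with `dηⁱ = 0` for all `i` -/
def WeakC : Prop := S.WeakK ∧ ∀ (i : Fin p) (X Y : V), S.dEta i X Y = 0

end MetricWeakFStructure

namespace MetricWeakFStructure

section Proofs

variable {p : ℕ} {F V : Type*} [CommRing F] [PartialOrder F] [IsOrderedRing F] [Algebra ℝ F]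
  [AddCommGroup V] [Module F V] (S : MetricWeakFStructure p F V)

/-! ### Basic calculus lemmas -/

lemma D_zero (X : V) : S.D X (0 : F) = 0 := by
  have h := S.D_algebraMap X 0; rwa [map_zero] at h

lemma D_one (X : V) : S.D X (1 : F) = 0 := by
  have h := S.D_algebraMap X 1; rwa [map_one] at h

lemma D_ite (X : V) (c : Prop) [Decidable c] :
    S.D X (if c then (1 : F) else 0) = 0 := by
  split <;> simp [S.D_one, S.D_zero]

lemma D_sub_right (X : V) (φ ψ : F) : S.D X (φ - ψ) = S.D X φ - S.D X ψ := by
  have h := S.D_add_right X (φ - ψ) ψ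
  rw [sub_add_cancel] at h
  linear_combination -h

lemma D_sum {ι : Type*} (X : V) (s : Finset ι) (φ : ι → F) :
    S.D X (∑ i ∈ s, φ i) = ∑ i ∈ s, S.D X (φ i) := by
  classical
  induction s using Finset.cons_induction with
  | empty => simp [S.D_zero]
  | cons a s ha ih => rw [Finset.sum_cons, Finset.sum_cons, S.D_add_right, ih]

lemma bracket_zero_right (X : V) : S.bracket X (0 : V) = 0 := by
  have h := S.bracket_leibniz X 0 0
  simpa [S.D_zero] using h

lemma bracket_zero_left (X : V) : S.bracket (0 : V) X = 0 := by
  rw [S.bracket_antisymm, S.bracket_zero_right, neg_zero]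

lemma bracket_add_right (X Y Z : V) :
    S.bracket X (Y + Z) = S.bracket X Y + S.bracket X Z := by
  rw [S.bracket_antisymm, S.bracket_add_left, S.bracket_antisymm Y X,
    S.bracket_antisymm Z X]
  abel

lemma bracket_neg_right (X Y : V) : S.bracket X (-Y) = -S.bracket X Y := by
  have h := S.bracket_add_right X Y (-Y)
  rw [add_neg_cancel, S.bracket_zero_right] at h
  linear_combination (norm := abel) -h

lemma bracket_sum_right {ι : Type*} (X : V) (s : Finset ι) (v : ι → V) :
    S.bracket X (∑ i ∈ s, v i) = ∑ i ∈ s, S.bracket X (v i) := by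
  classical
  induction s using Finset.cons_induction with
  | empty => simp [S.bracket_zero_right]
  | cons a s ha ih => rw [Finset.sum_cons, Finset.sum_cons, S.bracket_add_right, ih]

lemma g_zero_left (X : V) : S.g (0 : V) X = 0 := by
  have h := S.g_smul_left 0 0 X; simpa using h

lemma g_zero_right (X : V) : S.g X (0 : V) = 0 := by
  rw [S.g_symm, S.g_zero_left]

lemma g_add_right (X Y Z : V) : S.g X (Y + Z) = S.g X Y + S.g X Z := by
  rw [S.g_symm, S.g_add_left, S.g_symm Y X, S.g_symm Z X]

lemma g_smul_right (φ : F) (X Y : V) : S.g X (φ • Y) = φ * S.g X Y := by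
  rw [S.g_symm, S.g_smul_left, S.g_symm Y X]

lemma g_neg_right (X Y : V) : S.g X (-Y) = -S.g X Y := by
  have h := S.g_add_right X Y (-Y)
  rw [add_neg_cancel, S.g_zero_right] at h
  linear_combination -h

lemma g_neg_left (X Y : V) : S.g (-X) Y = -S.g X Y := by
  rw [S.g_symm, S.g_neg_right, S.g_symm Y X]

lemma g_sub_right (X Y Z : V) : S.g X (Y - Z) = S.g X Y - S.g X Z := by
  rw [sub_eq_add_neg, S.g_add_right, S.g_neg_right, sub_eq_add_neg]

lemma g_sub_left (X Y Z : V) : S.g (X - Y) Z = S.g X Z - S.g Y Z := by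
  rw [S.g_symm, S.g_sub_right, S.g_symm Z X, S.g_symm Z Y]

lemma g_sum_right {ι : Type*} (X : V) (s : Finset ι) (v : ι → V) :
    S.g X (∑ i ∈ s, v i) = ∑ i ∈ s, S.g X (v i) := by
  classical
  induction s using Finset.cons_induction with
  | empty => simp [S.g_zero_right]
  | cons a s ha ih => rw [Finset.sum_cons, Finset.sum_cons, S.g_add_right, ih]

lemma nabla_zero_left (X : V) : S.nabla (0 : V) X = 0 := by
  have h := S.nabla_smul_left 0 0 X; simpa using h

lemma nabla_sum_left {ι : Type*} (s : Finset ι) (v : ι → V) (X : V) :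
    S.nabla (∑ i ∈ s, v i) X = ∑ i ∈ s, S.nabla (v i) X := by
  classical
  induction s using Finset.cons_induction with
  | empty => simp [S.nabla_zero_left]
  | cons a s ha ih => rw [Finset.sum_cons, Finset.sum_cons, S.nabla_add_left, ih]

lemma nabla_sum_right {ι : Type*} (X : V) (s : Finset ι) (v : ι → V) :
    S.nabla X (∑ i ∈ s, v i) = ∑ i ∈ s, S.nabla X (v i) := by
  classical
  have h0 : S.nabla X (0 : V) = 0 := by
    have h := S.nabla_leibniz X 0 0; simpa [S.D_zero] using h
  induction s using Finset.cons_induction with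
  | empty => simpa using h0
  | cons a s ha ih => rw [Finset.sum_cons, Finset.sum_cons, S.nabla_add_right, ih]

/-! ### Algebraic lemmas on the weak f-structure -/

lemma eta_sum (k : Fin p) (c : Fin p → F) :
    S.η k (∑ i, c i • S.ξ i) = c k := by
  rw [map_sum]
  simp [S.eta_xi, Finset.sum_ite_eq, smul_eq_mul]

lemma sum_eta_xi_smul (j : Fin p) : (∑ i, S.η i (S.ξ j) • S.ξ i) = S.ξ j := by
  simp [S.eta_xi, ite_smul, Finset.sum_ite_eq']

lemma f_f_xi (j : Fin p) : S.f (S.f (S.ξ j)) = 0 := by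
  rw [S.f_squared, S.sum_eta_xi_smul, S.Q_xi, neg_add_cancel]

lemma f_xi (j : Fin p) : S.f (S.ξ j) = 0 := by
  have h := S.f_cubed (S.ξ j)
  rw [S.Q_xi, S.f_f_xi, map_zero, zero_add] at h
  exact h

lemma eta_f_Q (k : Fin p) (X : V) : S.η k (S.f (S.Q X)) = 0 := by
  have h1 := S.f_cubed X
  have h2 := S.f_squared (S.f X)
  rw [h2] at h1
  have h3 := congrArg (S.η k) h1
  simp only [map_add, map_neg, map_sum, map_smul, smul_eq_mul, map_zero] at h3
  rw [S.eta_Q] at h3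
  simp only [S.eta_xi, mul_ite, mul_one, mul_zero, Finset.sum_ite_eq,
    Finset.mem_univ, if_true] at h3
  linear_combination h3

lemma eta_f (k : Fin p) (X : V) : S.η k (S.f X) = 0 := by
  obtain ⟨Y, rfl⟩ := S.Q_nonsingular.2 X
  exact S.eta_f_Q k Y

lemma Q_f_comm (X : V) : S.Q (S.f X) = S.f (S.Q X) := by
  have h1 := S.f_cubed X
  have h2 := S.f_squared (S.f X)
  rw [h2] at h1
  simp only [S.eta_f, zero_smul, Finset.sum_const_zero, add_zero] at h1
  linear_combination (norm := abel) -h1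

lemma g_xi (X : V) (j : Fin p) : S.g X (S.ξ j) = S.η j X := by
  have h := S.compatible X (S.ξ j)
  rw [S.f_xi, S.g_zero_right, S.Q_xi] at h
  simp only [S.eta_xi, mul_ite, mul_one, mul_zero, Finset.sum_ite_eq',
    Finset.mem_univ, if_true] at h
  linear_combination -h

lemma f_skew (X Z : V) : S.g (S.f X) Z = -S.g X (S.f Z) := by
  obtain ⟨Y, rfl⟩ := S.Q_nonsingular.2 Z
  have h := S.compatible X (S.f Y)
  have he : ∀ i, S.η i (S.Q (S.f Y)) = 0 := fun i => by rw [S.eta_Q, S.eta_f]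
  simp only [he, mul_zero, Finset.sum_const_zero, sub_zero] at h
  rw [S.Q_f_comm] at h
  rw [S.f_squared Y, S.g_add_right, S.g_neg_right, S.g_sum_right] at h
  simp only [S.g_smul_right, S.g_xi, S.eta_f, mul_zero, Finset.sum_const_zero,
    add_zero] at h
  linear_combination -h

lemma eq_sum_eta (W : V) (hW : S.f W = 0) : W = ∑ i, S.η i W • S.ξ i := by
  obtain ⟨c, hc⟩ := (Submodule.mem_span_range_iff_exists_fun F).1 (S.ker_f_spanned W hW)
  rw [← hc]
  refine Finset.sum_congr rfl fun i _ => ?_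
  rw [S.eta_sum]

/-! ### Consequences of normality and `dΦ = 0` -/

lemma algebraMap_cancel {r : ℝ} (hr : r ≠ 0) {x : F}
    (h : algebraMap ℝ F r * x = 0) : x = 0 := by
  have h2 := congrArg (fun t => algebraMap ℝ F r⁻¹ * t) h
  simpa [← mul_assoc, ← map_mul, inv_mul_cancel₀ hr] using h2

lemma two_dEta (i : Fin p) (X Y : V) :
    2 * S.dEta i X Y
      = S.D X (S.η i Y) - S.D Y (S.η i X) - S.η i (S.bracket X Y) := by
  have h2 : (2 : F) * algebraMap ℝ F (1 / 2) = 1 := by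
    rw [← map_ofNat (algebraMap ℝ F) 2, ← map_mul]
    norm_num
  simp only [dEta]
  rw [← mul_assoc, h2, one_mul]

lemma n1_xi (hN : S.Normal) (j : Fin p) (X : V) :
    S.f (S.f (S.bracket X (S.ξ j))) - S.f (S.bracket (S.f X) (S.ξ j))
      + ∑ i, (2 * S.dEta i X (S.ξ j)) • S.ξ i = 0 := by
  have h := hN X (S.ξ j)
  simp only [N1, nijenhuis, S.f_xi, S.bracket_zero_right, map_zero, add_zero,
    sub_zero] at h
  exact h

lemma two_dEta_xi (hN : S.Normal) (i j : Fin p) (X : V) :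
    2 * S.dEta i X (S.ξ j) = 0 := by
  have h := congrArg (S.η i) (S.n1_xi hN j X)
  simp only [map_add, map_sub, map_sum, map_smul, smul_eq_mul, map_zero,
    S.eta_f, S.eta_xi, mul_ite, mul_one, mul_zero, Finset.sum_ite_eq,
    Finset.mem_univ, if_true] at h
  linear_combination h

lemma n4_eq (hN : S.Normal) (j k : Fin p) (X : V) :
    S.D (S.ξ j) (S.η k X) = S.η k (S.bracket (S.ξ j) X) := by
  have h := S.two_dEta_xi hN k j X
  rw [S.two_dEta, S.eta_xi, S.D_ite, S.bracket_antisymm X (S.ξ j), map_neg] at h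
  linear_combination -h

lemma n3_eq (hN : S.Normal) (j : Fin p) (X : V) :
    S.bracket (S.ξ j) (S.f X) = S.f (S.bracket (S.ξ j) X) := by
  have h := S.n1_xi hN j X
  simp only [S.two_dEta_xi hN, zero_smul, Finset.sum_const_zero, add_zero] at h
  have hfW : S.f (S.f (S.bracket X (S.ξ j)) - S.bracket (S.f X) (S.ξ j)) = 0 := by
    rw [map_sub]; exact h
  have hz : ∀ k, S.η k (S.f (S.bracket X (S.ξ j)) - S.bracket (S.f X) (S.ξ j))
      = 0 := by
    intro k
    rw [map_sub, S.eta_f, S.bracket_antisymm, map_neg, ← S.n4_eq hN j k,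
      S.eta_f, S.D_zero]
    simp
  have hW0 : S.f (S.bracket X (S.ξ j)) - S.bracket (S.f X) (S.ξ j) = 0 := by
    rw [S.eq_sum_eta _ hfW]
    simp [hz]
  have h5 : S.bracket (S.f X) (S.ξ j) = S.f (S.bracket X (S.ξ j)) := by
    linear_combination (norm := abel) -hW0
  rw [S.bracket_antisymm (S.ξ j) (S.f X), h5, S.bracket_antisymm X (S.ξ j),
    map_neg, neg_neg]

lemma xi_bracket_zero (hN : S.Normal) (i j : Fin p) :
    S.bracket (S.ξ i) (S.ξ j) = 0 := by
  have hf : S.f (S.bracket (S.ξ i) (S.ξ j)) = 0 := by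
    rw [← S.n3_eq hN i (S.ξ j), S.f_xi, S.bracket_zero_right]
  have hz : ∀ k, S.η k (S.bracket (S.ξ i) (S.ξ j)) = 0 := fun k => by
    rw [← S.n4_eq hN i k, S.eta_xi, S.D_ite]
  rw [S.eq_sum_eta _ hf]
  simp [hz]

lemma lie_Q (hN : S.Normal) (j : Fin p) (X : V) :
    S.bracket (S.ξ j) (S.Q X) = S.Q (S.bracket (S.ξ j) X) := by
  have hQ : ∀ Y : V, S.Q Y = -S.f (S.f Y) + ∑ i, S.η i Y • S.ξ i := by
    intro Y; rw [S.f_squared]; abel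
  rw [hQ X, S.bracket_add_right, S.bracket_neg_right, S.bracket_sum_right,
    S.n3_eq hN, S.n3_eq hN, hQ (S.bracket (S.ξ j) X)]
  congr 1
  refine Finset.sum_congr rfl fun i _ => ?_
  rw [S.bracket_leibniz, S.xi_bracket_zero hN, smul_zero, zero_add,
    S.n4_eq hN j i]

lemma lieg_f (hN : S.Normal) (hdP : ∀ X Y Z : V, S.dPhi X Y Z = 0) (j : Fin p)
    (X Y : V) : S.lieD_g (S.ξ j) X (S.f Y) = 0 := by
  have h := hdP (S.ξ j) X Y
  simp only [dPhi] at h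
  have h' := algebraMap_cancel (by norm_num : (1 / 3 : ℝ) ≠ 0) h
  have e1 : S.Phi Y (S.ξ j) = 0 := by simp [Phi, S.f_xi, S.g_zero_right]
  have e2 : S.Phi (S.ξ j) X = 0 := by
    rw [Phi, S.g_symm, S.g_xi, S.eta_f]
  have e3 : S.Phi (S.bracket X Y) (S.ξ j) = 0 := by
    simp [Phi, S.f_xi, S.g_zero_right]
  rw [e1, e2, e3, S.D_zero, S.D_zero] at h'
  have e4 : S.Phi (S.bracket Y (S.ξ j)) X
      = S.g X (S.f (S.bracket (S.ξ j) Y)) := by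
    rw [Phi, S.g_symm, S.f_skew, S.bracket_antisymm Y (S.ξ j), map_neg,
      S.g_neg_right, neg_neg]
  simp only [Phi] at h' e4
  simp only [lieD_g]
  rw [S.n3_eq hN j Y]
  linear_combination h' + e4

lemma killing (hN : S.Normal) (hdP : ∀ X Y Z : V, S.dPhi X Y Z = 0)
    (j : Fin p) : S.IsKilling (S.ξ j) := by
  intro X Z
  obtain ⟨Y, rfl⟩ := S.Q_nonsingular.2 Z
  have h0 : S.lieD_g (S.ξ j) (S.f X) (S.f Y) = 0 := S.lieg_f hN hdP j (S.f X) Y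
  have hD : S.D (S.ξ j) (S.g (S.f X) (S.f Y))
      = S.D (S.ξ j) (S.g X (S.Q Y))
        - ((∑ i, S.η i X * S.η i (S.Q (S.bracket (S.ξ j) Y)))
          + ∑ i, S.η i (S.bracket (S.ξ j) X) * S.η i (S.Q Y)) := by
    rw [S.compatible X Y, S.D_sub_right, S.D_sum]
    have e : ∀ i ∈ Finset.univ, S.D (S.ξ j) (S.η i X * S.η i (S.Q Y))
        = S.η i X * S.η i (S.Q (S.bracket (S.ξ j) Y))
          + S.η i (S.bracket (S.ξ j) X) * S.η i (S.Q Y) := by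
      intro i _
      rw [S.D_mul_right, S.n4_eq hN, S.n4_eq hN, S.lie_Q hN]
      ring
    rw [Finset.sum_congr rfl e, Finset.sum_add_distrib]
  have h2 : S.g (S.bracket (S.ξ j) (S.f X)) (S.f Y)
      = S.g (S.bracket (S.ξ j) X) (S.Q Y)
        - ∑ i, S.η i (S.bracket (S.ξ j) X) * S.η i (S.Q Y) := by
    rw [S.n3_eq hN, S.compatible]
  have h3 : S.g (S.f X) (S.bracket (S.ξ j) (S.f Y))
      = S.g X (S.Q (S.bracket (S.ξ j) Y))
        - ∑ i, S.η i X * S.η i (S.Q (S.bracket (S.ξ j) Y)) := by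
    rw [S.n3_eq hN, S.compatible]
  have h4 : S.g X (S.bracket (S.ξ j) (S.Q Y))
      = S.g X (S.Q (S.bracket (S.ξ j) Y)) := by
    rw [S.lie_Q hN]
  simp only [lieD_g] at h0 ⊢
  linear_combination h0 - hD + h2 + h3 - h4

lemma lieD_g_nabla (Z X Y : V) :
    S.lieD_g Z X Y = S.g (S.nabla X Z) Y + S.g X (S.nabla Y Z) := by
  simp only [lieD_g]
  rw [S.nabla_metric Z X Y, ← S.nabla_torsion_free Z X,
    ← S.nabla_torsion_free Z Y, S.g_sub_left, S.g_sub_right]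
  ring

lemma nabla_xi_xi (hN : S.Normal) (hdP : ∀ X Y Z : V, S.dPhi X Y Z = 0)
    (i j : Fin p) : S.nabla (S.ξ i) (S.ξ j) = 0 := by
  set W := S.nabla (S.ξ i) (S.ξ j) with hWdef
  have h1 := S.killing hN hdP j (S.ξ i) W
  rw [S.lieD_g_nabla] at h1
  have h2 := S.killing hN hdP i (S.ξ j) W
  rw [S.lieD_g_nabla] at h2
  have h3 : S.nabla (S.ξ j) (S.ξ i) = W := by
    have ht := S.nabla_torsion_free (S.ξ i) (S.ξ j)
    rw [S.xi_bracket_zero hN] at ht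
    rw [hWdef]
    linear_combination (norm := abel) -ht
  have h4 : S.g (S.nabla W (S.ξ i)) (S.ξ j) + S.g (S.ξ i) (S.nabla W (S.ξ j))
      = 0 := by
    have hm := S.nabla_metric W (S.ξ i) (S.ξ j)
    rw [S.g_xi, S.eta_xi, S.D_ite] at hm
    linear_combination -hm
  rw [h3] at h2
  have hsym : S.g (S.ξ j) (S.nabla W (S.ξ i))
      = S.g (S.nabla W (S.ξ i)) (S.ξ j) := S.g_symm _ _
  have hx : S.g W W + S.g W W = 0 := by linear_combination h1 + h2 - h4 - hsym
  have h0 := S.g_nonneg W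
  have h6 : S.g W W ≤ 0 := by
    rw [show S.g W W = -S.g W W from by linear_combination hx]
    exact neg_nonpos_of_nonneg h0
  exact S.g_definite W (le_antisymm h6 h0)

lemma ker_bracket (hN : S.Normal) (X Y : V) (hX : S.f X = 0) (hY : S.f Y = 0) :
    S.f (S.bracket X Y) = 0 := by
  have h := hN X Y
  simp only [N1, nijenhuis, hX, hY, S.bracket_zero_right, S.bracket_zero_left,
    map_zero, add_zero, sub_zero] at h
  have h3 : S.f (S.f (S.f (S.bracket X Y))) = 0 := by
    have hc := congrArg S.f h
    simpa [map_sum, map_smul, S.f_xi] using hc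
  have h4 : S.f (S.Q (S.bracket X Y)) = 0 := by
    have hc := S.f_cubed (S.bracket X Y)
    rw [h3, zero_add] at hc
    exact hc
  have h5 := S.eq_sum_eta _ h4
  simp only [S.eta_Q] at h5
  have h6 : S.Q (S.bracket X Y)
      = S.Q (∑ i, S.η i (S.bracket X Y) • S.ξ i) := by
    rw [map_sum]
    simp only [map_smul, S.Q_xi]
    exact h5
  have h7 := S.Q_nonsingular.1 h6
  rw [h7, map_sum]
  simp [S.f_xi]

lemma nabla_ker (hN : S.Normal) (hdP : ∀ X Y Z : V, S.dPhi X Y Z = 0)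
    (X Y : V) (hX : S.f X = 0) (hY : S.f Y = 0) : S.f (S.nabla X Y) = 0 := by
  have hXs := S.eq_sum_eta X hX
  have hYs := S.eq_sum_eta Y hY
  have key : ∀ c d : Fin p → F,
      S.f (S.nabla (∑ i, c i • S.ξ i) (∑ i, d i • S.ξ i)) = 0 := by
    intro c d
    rw [S.nabla_sum_right, map_sum]
    refine Finset.sum_eq_zero fun k _ => ?_
    have hz : S.nabla (∑ i, c i • S.ξ i) (S.ξ k) = 0 := by
      rw [S.nabla_sum_left]
      refine Finset.sum_eq_zero fun l _ => ?_
      rw [S.nabla_smul_left, S.nabla_xi_xi hN hdP, smul_zero]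
    rw [S.nabla_leibniz, hz, smul_zero, zero_add, map_smul, S.f_xi, smul_zero]
  rw [hXs, hYs]
  exact key _ _

end Proofs

end MetricWeakFStructure


open MetricWeakFStructure

/-- On a weak K-manifold the vector fields `ξ₁, …, ξ_p` are Killing;
moreover `∇_{ξᵢ} ξⱼ = 0` for all `i, j`, so that the characteristic distribution
`ker f` is integrable (brackets of sections of `ker f` stay in `ker f`) and defines
a totally geodesic foliation. -/
theorem statement_3 {p : ℕ} {F V : Type*} [CommRing F] [PartialOrder F] [IsOrderedRing F] [Algebra ℝ F]
    [AddCommGroup V] [Module F V] (S : MetricWeakFStructure p F V)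
    (hK : S.WeakK) :
    (∀ i : Fin p, S.IsKilling (S.ξ i)) ∧
    (∀ i j : Fin p, S.nabla (S.ξ i) (S.ξ j) = 0) ∧
    (∀ X Y : V, S.f X = 0 → S.f Y = 0 → S.f (S.bracket X Y) = 0) ∧
    (∀ X Y : V, S.f X = 0 → S.f Y = 0 → S.f (S.nabla X Y + S.nabla Y X) = 0) := by
  obtain ⟨hN, hdP⟩ := hK
  refine ⟨fun i => S.killing hN hdP i, fun i j => S.nabla_xi_xi hN hdP i j,
    fun X Y hX hY => S.ker_bracket hN X Y hX hY, fun X Y hX hY => ?_⟩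
  rw [map_add, S.nabla_ker hN hdP X Y hX hY, S.nabla_ker hN hdP Y X hY hX,
    add_zero]
end
end

section
/- For a weak almost S-structure (f, Q, ξ_i, η^i, g), the tensors h_i = (1/2) £_{ξ_i} f satisfy h_i ξ_j = 0 and g(h_i X, ξ_j) = 0 for all vector fields X and all i, j; consequently the distribution f(TM) is invariant under each h_i, and the g-adjoint h_i^* satisfies h_i^* ξ_j = 0. -/
/-!
An algebraic model of the calculus of smooth vector fields on a smooth manifold
`M^{2n+p}`: `F` plays the role of the ordered commutative `ℝ`-algebra `C^∞(M)` of
smooth real-valued functions, and `V` the `F`-module `𝔛(M)` of smooth vector fields,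
equipped with the derivation action `D` of vector fields on functions, the Lie
bracket of vector fields, a Riemannian metric `g` (a symmetric, `F`-bilinear,
positive-definite form) and its Levi-Civita connection `nabla` (the unique metric,
torsion-free affine connection of `g`).
-/

noncomputable section

open MetricWeakFStructure

section Aux

variable {p : ℕ} {F V : Type*} [CommRing F] [PartialOrder F] [IsOrderedRing F] [Algebra ℝ F]
  [AddCommGroup V] [Module F V] (S : MetricWeakFStructure p F V)

lemma aux_two_half : (2 : F) * algebraMap ℝ F (1 / 2) = 1 := by
  rw [← map_ofNat (algebraMap ℝ F) 2, ← map_mul]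
  norm_num

lemma aux_half_mul_eq {x y : F} (h : algebraMap ℝ F (1 / 2) * x = y) : x = 2 * y := by
  calc x = (2 * algebraMap ℝ F (1 / 2)) * x := by rw [aux_two_half, one_mul]
    _ = 2 * (algebraMap ℝ F (1 / 2) * x) := by ring
    _ = 2 * y := by rw [h]

lemma aux_half_cancel {x : F} (h : (2 : F) * x = 0) : x = 0 := by
  calc x = (2 * algebraMap ℝ F (1 / 2)) * x := by rw [aux_two_half, one_mul]
    _ = algebraMap ℝ F (1 / 2) * (2 * x) := by ring
    _ = 0 := by rw [h, mul_zero]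

lemma aux_D_zero (X : V) : S.D X (0 : F) = 0 := by
  have h := S.D_add_right X 0 0
  rw [add_zero] at h
  exact (left_eq_add.mp h)

lemma aux_D_one (X : V) : S.D X (1 : F) = 0 := by
  have h := S.D_algebraMap X 1
  rwa [map_one] at h

lemma aux_D_eta_xi (X : V) (k j : Fin p) : S.D X (S.η k (S.ξ j)) = 0 := by
  rw [S.eta_xi]
  split_ifs
  · exact aux_D_one S X
  · exact aux_D_zero S X

lemma aux_g_zero_left (X : V) : S.g 0 X = 0 := by
  have h := S.g_add_left 0 0 X
  rw [add_zero] at h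
  exact (left_eq_add.mp h)

lemma aux_g_zero_right (X : V) : S.g X 0 = 0 := by
  rw [S.g_symm]; exact aux_g_zero_left S X

lemma aux_bracket_zero_right (X : V) : S.bracket X 0 = 0 := by
  have h := S.bracket_leibniz X (0 : F) 0
  simpa using h

lemma aux_eta_ff (j : Fin p) (X : V) : S.η j (S.f (S.f X)) = 0 := by
  rw [S.f_squared, map_add, map_neg, S.eta_Q, map_sum]
  simp [S.eta_xi, map_smul, smul_eq_mul, mul_ite, Finset.sum_ite_eq]

lemma aux_eta_f (j : Fin p) (X : V) : S.η j (S.f X) = 0 := by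
  obtain ⟨Y, rfl⟩ := S.Q_nonsingular.2 X
  have h := S.f_cubed Y
  have h2 : S.f (S.Q Y) = -S.f (S.f (S.f Y)) := by
    rw [eq_neg_iff_add_eq_zero, add_comm]; exact h
  rw [h2, map_neg, aux_eta_ff, neg_zero]

lemma aux_span_eta_zero (W : V) (hW : W ∈ Submodule.span F (Set.range S.ξ))
    (hη : ∀ k, S.η k W = 0) : W = 0 := by
  set T : V →ₗ[F] V := ∑ i, (S.η i).smulRight (S.ξ i) with hTdef
  have hTgen : ∀ j, T (S.ξ j) = S.ξ j := by
    intro j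
    simp [hTdef, LinearMap.sum_apply, LinearMap.smulRight_apply, S.eta_xi, ite_smul,
      Finset.sum_ite_eq, Finset.sum_ite_eq']
  have hTW : ∀ u ∈ Submodule.span F (Set.range S.ξ), T u = u := by
    intro u hu
    induction hu using Submodule.span_induction with
    | mem x hx => obtain ⟨j, rfl⟩ := hx; exact hTgen j
    | zero => simp
    | add x y hx hy hpx hpy => rw [map_add, hpx, hpy]
    | smul c x hx hpx => rw [map_smul, hpx]
  have hz : T W = 0 := by
    simp [hTdef, LinearMap.sum_apply, LinearMap.smulRight_apply, hη]
  rw [← hTW W hW, hz]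

lemma aux_f_xi (j : Fin p) : S.f (S.ξ j) = 0 := by
  have h2 : S.f (S.f (S.ξ j)) = 0 := by
    rw [S.f_squared, S.Q_xi]
    simp [S.eta_xi, ite_smul, Finset.sum_ite_eq']
  exact aux_span_eta_zero S _ (S.ker_f_spanned _ h2) (fun k => aux_eta_f S k _)

lemma aux_g_xi (j : Fin p) (X : V) : S.g X (S.ξ j) = S.η j X := by
  have h := S.compatible X (S.ξ j)
  rw [aux_f_xi, aux_g_zero_right, S.Q_xi] at h
  have hs : ∑ i, S.η i X * S.η i (S.ξ j) = S.η j X := by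
    simp [S.eta_xi, mul_ite, Finset.sum_ite_eq']
  rw [hs] at h
  linear_combination -h

lemma aux_dEta_eq (hS : S.WeakAlmostS) (i : Fin p) (X Y : V) :
    S.D X (S.η i Y) - S.D Y (S.η i X) - S.η i (S.bracket X Y) = 2 * S.Phi X Y := by
  have h := hS i X Y
  unfold MetricWeakFStructure.dEta at h
  exact aux_half_mul_eq h

lemma aux_eta_bracket_xi (hS : S.WeakAlmostS) (k i : Fin p) (Y : V) :
    S.η k (S.bracket (S.ξ i) Y) = S.D (S.ξ i) (S.η k Y) := by
  have h := aux_dEta_eq S hS k (S.ξ i) Y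
  have hΦ : S.Phi (S.ξ i) Y = 0 := by
    show S.g (S.ξ i) (S.f Y) = 0
    rw [S.g_symm, aux_g_xi, aux_eta_f]
  rw [hΦ, mul_zero, aux_D_eta_xi] at h
  linear_combination -h

lemma aux_eta_bxx (hS : S.WeakAlmostS) (k i j : Fin p) :
    S.η k (S.bracket (S.ξ i) (S.ξ j)) = 0 := by
  rw [aux_eta_bracket_xi S hS, aux_D_eta_xi]

lemma aux_Phi_antisymm (hS : S.WeakAlmostS) (i : Fin p) (X Y : V) :
    S.Phi X Y = -S.Phi Y X := by
  have h1 := aux_dEta_eq S hS i X Y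
  have h2 := aux_dEta_eq S hS i Y X
  have hb : S.η i (S.bracket Y X) = -S.η i (S.bracket X Y) := by
    rw [S.bracket_antisymm Y X, map_neg]
  rw [hb] at h2
  have h3 : 2 * (S.Phi X Y + S.Phi Y X) = 0 := by linear_combination -h1 - h2
  have h4 := aux_half_cancel h3
  linear_combination h4

lemma aux_f_bxx (hS : S.WeakAlmostS) (i j : Fin p) :
    S.f (S.bracket (S.ξ i) (S.ξ j)) = 0 := by
  set W := S.bracket (S.ξ i) (S.ξ j) with hW
  have hΦ : ∀ Z, S.Phi W Z = 0 := by
    intro Z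
    have h := aux_dEta_eq S hS i W Z
    have hDZ : S.D Z (S.η i W) = 0 := by
      have h0 : S.η i W = 0 := aux_eta_bxx S hS i i j
      rw [h0]; exact aux_D_zero S Z
    have hbr : S.η i (S.bracket W Z) = S.D W (S.η i Z) := by
      have hj := S.bracket_jacobi (S.ξ i) (S.ξ j) Z
      have hWZ : S.bracket W Z =
          S.bracket (S.ξ i) (S.bracket (S.ξ j) Z) - S.bracket (S.ξ j) (S.bracket (S.ξ i) Z) := by
        rw [hj]; abel
      rw [hWZ, map_sub, aux_eta_bracket_xi S hS, aux_eta_bracket_xi S hS,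
        aux_eta_bracket_xi S hS, aux_eta_bracket_xi S hS, hW, S.D_bracket]
    rw [hDZ, hbr] at h
    have h2 : (2 : F) * S.Phi W Z = 0 := by linear_combination -h
    exact aux_half_cancel h2
  have hg : S.g (S.f W) (S.f W) = 0 := by
    have h := aux_Phi_antisymm S hS i (S.f W) W
    rw [hΦ (S.f W), neg_zero] at h
    exact h
  exact S.g_definite _ hg

lemma aux_Qf (X : V) : S.f (S.Q X) = S.Q (S.f X) := by
  have h1 := S.f_cubed X
  have h2 : S.f (S.f (S.f X)) = -S.Q (S.f X) := by
    rw [S.f_squared (S.f X)]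
    simp [aux_eta_f]
  rw [h2] at h1
  rw [neg_add_eq_zero] at h1
  exact h1.symm

lemma aux_eta_hT (hS : S.WeakAlmostS) (i j : Fin p) (X : V) :
    S.η j (S.hT i X) = 0 := by
  unfold MetricWeakFStructure.hT MetricWeakFStructure.N3 MetricWeakFStructure.lieD_f
  have h1 : S.η j (S.bracket (S.ξ i) (S.f X)) = 0 := by
    rw [aux_eta_bracket_xi S hS, aux_eta_f]
    exact aux_D_zero S _
  rw [map_smul, map_sub, h1, aux_eta_f]
  simp

lemma aux_g_hT_xi (hS : S.WeakAlmostS) (i j : Fin p) (X : V) :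
    S.g (S.hT i X) (S.ξ j) = 0 := by
  rw [aux_g_xi, aux_eta_hT S hS]

lemma aux_hT_xi (hS : S.WeakAlmostS) (i j : Fin p) : S.hT i (S.ξ j) = 0 := by
  unfold MetricWeakFStructure.hT MetricWeakFStructure.N3 MetricWeakFStructure.lieD_f
  rw [aux_f_xi, aux_bracket_zero_right, aux_f_bxx S hS]
  simp

end Aux

/-- For a weak almost S-structure, the tensors `hᵢ = (1/2) £_{ξᵢ} f`
satisfy `hᵢ ξⱼ = 0` and `g(hᵢ X, ξⱼ) = 0`; consequently `f(TM)` is invariant under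
each `hᵢ`, and the `g`-adjoint `hᵢ*` satisfies `hᵢ* ξⱼ = 0`. -/
theorem statement_9 {p : ℕ} {F V : Type*} [CommRing F] [PartialOrder F] [IsOrderedRing F] [Algebra ℝ F]
    [AddCommGroup V] [Module F V] (S : MetricWeakFStructure p F V)
    (hS : S.WeakAlmostS) :
    (∀ i j : Fin p, S.hT i (S.ξ j) = 0) ∧
    (∀ (i j : Fin p) (X : V), S.g (S.hT i X) (S.ξ j) = 0) ∧
    (∀ (i : Fin p) (X : V), (∃ Y, X = S.f Y) → ∃ Z, S.hT i X = S.f Z) ∧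
    (∀ (i : Fin p) (hs : V → V),
      (∀ X Y : V, S.g (hs X) Y = S.g X (S.hT i Y)) → ∀ j : Fin p, hs (S.ξ j) = 0) := by
  refine ⟨fun i j => aux_hT_xi S hS i j, fun i j X => aux_g_hT_xi S hS i j X, ?_, ?_⟩
  · rintro i X ⟨Y, rfl⟩
    set W := S.hT i (S.f Y) with hWdef
    have hη : ∀ k, S.η k W = 0 := fun k => aux_eta_hT S hS i k (S.f Y)
    have hff : S.f (S.f W) = -S.Q W := by
      rw [S.f_squared]
      simp [hη]
    obtain ⟨U, hU⟩ := S.Q_nonsingular.2 (-S.f W)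
    have hQ : S.Q (S.f U) = S.Q W := by
      rw [← aux_Qf, hU, map_neg, hff, neg_neg]
    exact ⟨U, (S.Q_nonsingular.1 hQ).symm⟩
  · intro i hs hadj j
    have h : S.g (hs (S.ξ j)) (hs (S.ξ j)) = 0 := by
      rw [hadj, S.g_symm, aux_g_hT_xi S hS]
    exact S.g_definite _ h
end
end
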